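/- arXiv:1905.12696 — 7 statements merged into one kernel-verified Lean document; each statement's English description precedes it below -/
import Mathlib

section
/- Identifiability of the regression coefficient (Proposition 1). Let A, Ã ∈ ℝ^{p×K} and Σ_Z, Σ̃_Z ∈ ℝ^{K×K} be such that both pairs (A, Σ_Z) and (Ã, Σ̃_Z) satisfy Assumption 1, let Γ, Γ̃ be p×p diagonal positive semidefinite matrices, and let β, β̃ ∈ ℝ^K. If A Σ_Z Aᵀ + Γ = Ã Σ̃_Z Ãᵀ + Γ̃ and A Σ_Z β = Ã Σ̃_Z β̃, then there exists a K×K signed permutation matrix P such that Ã = A P, Σ̃_Z = Pᵀ Σ_Z P, and β̃ = Pᵀ β. -/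
open Matrix

/-- A square real matrix is a *signed permutation matrix* if every row and every column
has exactly one nonzero entry, and each nonzero entry equals `1` or `-1`. -/
def IsSignedPermMatrix {K : ℕ} (P : Matrix (Fin K) (Fin K) ℝ) : Prop :=
  (∀ i, ∃! j, P i j ≠ 0) ∧ (∀ j, ∃! i, P i j ≠ 0) ∧
    ∀ i j, P i j ≠ 0 → P i j = 1 ∨ P i j = -1

/-- Assumption 1 of the paper for a pair `(A, S)`:
(A0) every row of `A` has ℓ1-norm at most 1;
(A1) every column `k` has at least two pure rows, i.e. rows whose entrywise absolute
value equals the canonical basis vector `e k`;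
(A2) `S` is (symmetric) positive definite and satisfies the separation condition. -/
def Assumption1 {p K : ℕ} (A : Matrix (Fin p) (Fin K) ℝ)
    (S : Matrix (Fin K) (Fin K) ℝ) : Prop :=
  (∀ j, ∑ k, |A j k| ≤ 1) ∧
  (∀ k : Fin K, ∃ j l : Fin p, j ≠ l ∧
      (∀ a, |A j a| = if a = k then 1 else 0) ∧
      (∀ a, |A l a| = if a = k then 1 else 0)) ∧
  S.PosDef ∧
  (∃ ν > (0 : ℝ), ∀ a b : Fin K, a < b → min (S a a) (S b b) - |S a b| > ν)

/-!
Write `Σ = A S Aᵀ`; off the diagonal it is determined by the data, and so is `A S β`.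
If row `l` of `A` is pure for column `k`, then `|Σ q l| = |A q ⬝ᵥ S e_k| ≤ S k k` for every row
`q`, with equality only when row `q` is also pure for `k`: the row has ℓ1-norm at most one and the
entries of column `k` of `S` off the diagonal are strictly smaller than `S k k`. For two rows pure
for `k` the bound is attained, so reading the same entry of `Σ` through `(Ã, S̃)` and running the
extremal argument there shows that these rows are pure for `Ã` too, all for one column `π k` and
with one sign `ε k`. Evaluating `Σ` and `A S β` at pure rows then gives `S̃ = Pᵀ S P` for the
signed permutation `P` built from `π` and `ε`, and `S Aᵀ = P S̃ Ãᵀ`, `S β = P S̃ β̃`; since `S` is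
invertible this yields `Ã = A P` and `β̃ = Pᵀ β`.
-/

open Finset

section Vectors

variable {m n : Type*} [Fintype n]

lemma abs_dotProduct_le_sum {x v : n → ℝ} : |x ⬝ᵥ v| ≤ ∑ a, |x a| * |v a| :=
  (abs_sum_le_sum_abs _ _).trans_eq (by simp only [abs_mul])

lemma abs_dotProduct_le {x v : n → ℝ} {B : ℝ} (hx : ∑ a, |x a| ≤ 1) (hv : ∀ a, |v a| ≤ B)
    (hB : 0 ≤ B) : |x ⬝ᵥ v| ≤ B :=
  calc |x ⬝ᵥ v| ≤ ∑ a, |x a| * |v a| := abs_dotProduct_le_sum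
    _ ≤ ∑ a, |x a| * B := by gcongr with a; exact hv a
    _ = (∑ a, |x a|) * B := by rw [sum_mul]
    _ ≤ B := mul_le_of_le_one_left hB hx

lemma mul_mul_transpose_apply (A : Matrix m n ℝ) (S : Matrix n n ℝ) (i j : m) :
    (A * S * Aᵀ) i j = A i ⬝ᵥ (S *ᵥ A j) := by
  rw [Matrix.mul_assoc]
  rfl

end Vectors

section PureVectors

variable {m n : Type*} [DecidableEq n]

/-- Row `j` of `A` is a pure row for column `k`, in the sense of (A1), iff `IsPure (A j) k`. -/
def IsPure (x : n → ℝ) (k : n) : Prop :=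
  x = Pi.single k (x k) ∧ |x k| = 1

namespace IsPure

variable {x : n → ℝ} {k : n}

lemma of_abs (h : ∀ a, |x a| = if a = k then 1 else 0) : IsPure x k := by
  refine ⟨funext fun a => ?_, by simpa using h k⟩
  by_cases ha : a = k
  · subst ha; simp
  · simpa [Pi.single_apply, ha] using h a

lemma mul_self (h : IsPure x k) : x k * x k = 1 := by
  rw [← abs_mul_abs_self, h.2, one_mul]

lemma apply_ne_zero (h : IsPure x k) : x k ≠ 0 := fun h0 => by
  simpa [h0] using h.mul_self

lemma unique {k' : n} (h : IsPure x k) (h' : IsPure x k') : k = k' := by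
  by_contra hne
  apply h'.apply_ne_zero
  rw [h.1, Pi.single_eq_of_ne (Ne.symm hne)]

variable [Fintype n]

lemma dotProduct (h : IsPure x k) (v : n → ℝ) : x ⬝ᵥ v = x k * v k := by
  conv_lhs => rw [h.1]
  rw [single_dotProduct]

lemma abs_dotProduct (h : IsPure x k) (v : n → ℝ) : |x ⬝ᵥ v| = |v k| := by
  rw [h.dotProduct, abs_mul, h.2, one_mul]

lemma mulVec_apply (h : IsPure x k) (M : Matrix m n ℝ) (a : m) : (M *ᵥ x) a = M a k * x k := by
  rw [mulVec, dotProduct_comm, h.dotProduct, mul_comm]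

lemma apply_eq_of_dotProduct_eq {x' v w : n → ℝ} {c : n} {e : ℝ} (h : IsPure x k)
    (h' : IsPure x' c) (hsign : x' c = e * x k) (hvw : x ⬝ᵥ v = x' ⬝ᵥ w) : v k = e * w c := by
  rw [h.dotProduct, h'.dotProduct, hsign] at hvw
  exact mul_left_cancel₀ h.apply_ne_zero (by linear_combination hvw)

end IsPure

variable [Fintype n]

/-- The equality case of `abs_dotProduct_le`, when `|v|` reaches `B` at one coordinate at most. -/
lemma exists_isPure_of_le_abs_dotProduct {x v : n → ℝ} {B : ℝ} (hx : ∑ a, |x a| ≤ 1)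
    (hv : ∀ a, |v a| ≤ B) (hB : 0 < B) (huniq : ∀ a b, |v a| = B → |v b| = B → a = b)
    (h : B ≤ |x ⬝ᵥ v|) : ∃ c, |v c| = B ∧ IsPure x c := by
  have hsum : ∑ a, |x a| * |v a| ≤ (∑ a, |x a|) * B := by
    rw [sum_mul]; gcongr with a; exact hv a
  have hle := abs_dotProduct_le_sum (x := x) (v := v)
  have hx1 : ∑ a, |x a| = 1 := by nlinarith
  have hnonneg : ∀ a, 0 ≤ |x a| * (B - |v a|) := fun a =>
    mul_nonneg (abs_nonneg _) (sub_nonneg.2 (hv a))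
  have hslack : ∑ a, |x a| * (B - |v a|) = 0 := by
    have hexpand : ∑ a, |x a| * (B - |v a|) = (∑ a, |x a|) * B - ∑ a, |x a| * |v a| := by
      simp only [mul_sub, sum_sub_distrib, sum_mul]
    rw [hx1, one_mul] at hexpand
    linarith [sum_nonneg fun a (_ : a ∈ univ) => hnonneg a]
  have hsupp : ∀ a, x a ≠ 0 → |v a| = B := fun a ha => by
    rcases mul_eq_zero.1 ((sum_eq_zero_iff_of_nonneg fun a _ => hnonneg a).1 hslack a
      (mem_univ a)) with h0 | h0
    · exact absurd (abs_eq_zero.1 h0) ha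
    · linarith
  obtain ⟨c, -, hc⟩ := exists_ne_zero_of_sum_ne_zero (hx1.trans_ne one_ne_zero)
  have hc : x c ≠ 0 := abs_ne_zero.1 hc
  have hzero : ∀ a, a ≠ c → x a = 0 := fun a hac => by
    by_contra ha
    exact hac (huniq a c (hsupp a ha) (hsupp c hc))
  refine ⟨c, hsupp c hc, funext fun a => ?_, ?_⟩
  · by_cases hac : a = c
    · subst hac; simp
    · rw [hzero a hac, Pi.single_eq_of_ne hac]
  · rw [← hx1, Fintype.sum_eq_single c fun a hac => by rw [hzero a hac, abs_zero]]

lemma cov_apply_of_isPure {A : Matrix m n ℝ} {S : Matrix n n ℝ} {i j : m} {k k' : n}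
    (hi : IsPure (A i) k) (hj : IsPure (A j) k') :
    (A * S * Aᵀ) i j = A i k * S k k' * A j k' := by
  rw [mul_mul_transpose_apply, hi.dotProduct, hj.mulVec_apply, mul_assoc]

lemma abs_cov_apply_of_isPure {A : Matrix m n ℝ} {S : Matrix n n ℝ} {i j : m} {k k' : n}
    (hi : IsPure (A i) k) (hj : IsPure (A j) k') : |(A * S * Aᵀ) i j| = |S k k'| := by
  rw [cov_apply_of_isPure hi hj, abs_mul, abs_mul, hi.2, hj.2, one_mul, mul_one]

end PureVectors

section SignedPerm

variable {m n : Type*} [DecidableEq n] (π : n ≃ n) (ε : n → ℝ)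

def signedPermMatrix : Matrix n n ℝ :=
  of fun k c => if π k = c then ε k else 0

lemma signedPermMatrix_apply_equiv (a k : n) :
    signedPermMatrix π ε a (π k) = if a = k then ε a else 0 := by
  simp [signedPermMatrix, π.injective.eq_iff]

variable [Fintype n]

lemma mul_signedPermMatrix_apply (M : Matrix m n ℝ) (j : m) (k : n) :
    (M * signedPermMatrix π ε) j (π k) = M j k * ε k := by
  simp [mul_apply, signedPermMatrix_apply_equiv]

lemma transpose_signedPermMatrix_mul_apply {o : Type*} (M : Matrix n o ℝ) (k : n) (x : o) :
    ((signedPermMatrix π ε)ᵀ * M) (π k) x = ε k * M k x := by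
  simp [mul_apply, signedPermMatrix_apply_equiv]

lemma transpose_signedPermMatrix_mulVec_apply (v : n → ℝ) (k : n) :
    ((signedPermMatrix π ε)ᵀ *ᵥ v) (π k) = ε k * v k := by
  simp [mulVec, dotProduct, signedPermMatrix_apply_equiv]

lemma isSignedPermMatrix_signedPermMatrix {K : ℕ} (π : Fin K ≃ Fin K) {ε : Fin K → ℝ}
    (hε : ∀ k, ε k * ε k = 1) : IsSignedPermMatrix (signedPermMatrix π ε) := by
  have hne : ∀ k, ε k ≠ 0 := fun k h0 => by simpa [h0] using hε k
  refine ⟨fun k => ⟨π k, by simp [signedPermMatrix, hne], fun c hc => ?_⟩,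
    fun c => ⟨π.symm c, by simp [signedPermMatrix, hne], fun k hk => ?_⟩,
    fun k c hkc => ?_⟩
  · by_contra h; simp [signedPermMatrix, Ne.symm h] at hc
  · by_contra h
    simp only [signedPermMatrix, of_apply, ne_eq, ite_eq_right_iff, not_forall] at hk
    exact h (π.eq_symm_apply.2 hk.1)
  · by_cases h : π k = c
    · simpa [signedPermMatrix, h] using mul_self_eq_one_iff.1 (hε k)
    · simp [signedPermMatrix, h] at hkc

end SignedPerm

/-- Conjugating by the signed permutation `(π, ε)` turns `S` into `St`, so `S u = P St w`
determines `w = Pᵀ u` once `S` is invertible. -/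
lemma apply_equiv_eq_of_mulVec {n : Type*} [Fintype n] [DecidableEq n] {S St : Matrix n n ℝ}
    {π : n ≃ n} {ε : n → ℝ} (hS : S.PosDef) (hε : ∀ k, ε k * ε k = 1)
    (hSt : ∀ k k', St (π k) (π k') = ε k * ε k' * S k k') {u w : n → ℝ}
    (h : ∀ k, (S *ᵥ u) k = ε k * (St *ᵥ w) (π k)) (k : n) : w (π k) = ε k * u k := by
  have hSu : S *ᵥ u = S *ᵥ fun k => ε k * w (π k) := funext fun a => by
    rw [h a, mulVec, mulVec, dotProduct, dotProduct,
      ← π.sum_comp (fun c => St (π a) c * w c), mul_sum]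
    refine sum_congr rfl fun b _ => ?_
    rw [hSt]
    linear_combination (S a b * ε b * w (π b)) * hε a
  have hu := congrFun (mulVec_injective_of_isUnit hS.isUnit hSu) k
  linear_combination (-ε k) * hu - w (π k) * hε k

def EqOffDiag {m α : Type*} (M N : Matrix m m α) : Prop :=
  ∀ i j, i ≠ j → M i j = N i j

lemma EqOffDiag.symm {m α : Type*} {M N : Matrix m m α} (h : EqOffDiag M N) : EqOffDiag N M :=
  fun i j hij => (h i j hij).symm

def MatchesPureRows {m n : Type*} [DecidableEq n] (A At : Matrix m n ℝ) (π : n ≃ n)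
    (ε : n → ℝ) : Prop :=
  ∀ k i, IsPure (A i) k → IsPure (At i) (π k) ∧ At i (π k) = ε k * A i k

namespace Assumption1

variable {p K : ℕ} {A : Matrix (Fin p) (Fin K) ℝ} {S : Matrix (Fin K) (Fin K) ℝ}

lemma exists_isPure (h : Assumption1 A S) (k : Fin K) : ∃ j, IsPure (A j) k :=
  let ⟨j, _, _, hj, _⟩ := h.2.1 k
  ⟨j, .of_abs hj⟩

lemma exists_isPure_ne (h : Assumption1 A S) (k : Fin K) (r : Fin p) :
    ∃ j, j ≠ r ∧ IsPure (A j) k := by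
  obtain ⟨j, l, hjl, hj, hl⟩ := h.2.1 k
  by_cases hjr : j = r
  · exact ⟨l, hjr ▸ hjl.symm, .of_abs hl⟩
  · exact ⟨j, hjr, .of_abs hj⟩

lemma sum_abs_le (h : Assumption1 A S) (j : Fin p) : ∑ a, |A j a| ≤ 1 :=
  h.1 j

lemma posDef (h : Assumption1 A S) : S.PosDef :=
  h.2.2.1

lemma diag_pos (h : Assumption1 A S) (a : Fin K) : 0 < S a a :=
  h.posDef.diag_pos

lemma abs_apply_lt_diag (h : Assumption1 A S) {a b : Fin K} (hab : a ≠ b) : |S a b| < S b b := by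
  obtain ⟨ν, hν, hsep⟩ := h.2.2.2
  rcases hab.lt_or_gt with hlt | hlt
  · linarith [hsep a b hlt, min_le_right (S a a) (S b b)]
  · have hsymm : S b a = S a b := by simpa using h.posDef.isHermitian.apply a b
    have := hsep b a hlt
    rw [hsymm] at this
    linarith [min_le_left (S b b) (S a a)]

lemma abs_apply_le_diag (h : Assumption1 A S) (a b : Fin K) : |S a b| ≤ S b b := by
  rcases eq_or_ne a b with rfl | hab
  · exact (abs_of_pos (h.diag_pos a)).le
  · exact (h.abs_apply_lt_diag hab).le

lemma abs_cov_le (h : Assumption1 A S) {l : Fin p} {k : Fin K} (hl : IsPure (A l) k)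
    (q : Fin p) : |(A * S * Aᵀ) q l| ≤ S k k := by
  rw [mul_mul_transpose_apply]
  refine abs_dotProduct_le (h.sum_abs_le q) (fun a => ?_) (h.diag_pos k).le
  rw [hl.mulVec_apply, abs_mul, hl.2, mul_one]
  exact h.abs_apply_le_diag a k

lemma isPure_of_diag_le_abs_cov (h : Assumption1 A S) {l q : Fin p} {k : Fin K}
    (hl : IsPure (A l) k) (hq : S k k ≤ |(A * S * Aᵀ) q l|) : IsPure (A q) k := by
  have habs : ∀ a, |(S *ᵥ A l) a| = |S a k| := fun a => by
    rw [hl.mulVec_apply, abs_mul, hl.2, mul_one]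
  have hmax : ∀ a, |(S *ᵥ A l) a| = S k k → a = k := fun a ha => by
    by_contra hak
    exact (h.abs_apply_lt_diag hak).ne (habs a ▸ ha)
  rw [mul_mul_transpose_apply] at hq
  obtain ⟨c, hc, hqc⟩ := exists_isPure_of_le_abs_dotProduct (h.sum_abs_le q)
    (fun a => (habs a).trans_le (h.abs_apply_le_diag a k)) (h.diag_pos k)
    (fun a b ha hb => (hmax a ha).trans (hmax b hb).symm) hq
  exact hmax c hc ▸ hqc

end Assumption1

section TwoModels

variable {p K : ℕ} {A At : Matrix (Fin p) (Fin K) ℝ} {S St : Matrix (Fin K) (Fin K) ℝ}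
  {i j l : Fin p} {k c c' : Fin K}

lemma diag_le_of_isPure (hA : Assumption1 A S) (hAt : Assumption1 At St)
    (hcov : EqOffDiag (A * S * Aᵀ) (At * St * Atᵀ))
    (hj : IsPure (A j) k) (hj' : IsPure (At j) c) : St c c ≤ S k k := by
  obtain ⟨r, hrj, hr⟩ := hAt.exists_isPure_ne c j
  calc St c c = |(At * St * Atᵀ) r j| := by
        rw [abs_cov_apply_of_isPure hr hj', abs_of_pos (hAt.diag_pos c)]
    _ = |(A * S * Aᵀ) r j| := by rw [hcov r j hrj]
    _ ≤ S k k := hA.abs_cov_le hj r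

lemma diag_eq_of_isPure (hA : Assumption1 A S) (hAt : Assumption1 At St)
    (hcov : EqOffDiag (A * S * Aᵀ) (At * St * Atᵀ))
    (hj : IsPure (A j) k) (hj' : IsPure (At j) c) : St c c = S k k :=
  le_antisymm (diag_le_of_isPure hA hAt hcov hj hj') (diag_le_of_isPure hAt hA hcov.symm hj' hj)

/-- Otherwise `|St c c'| = S k k = St c' c'`, against the strict diagonal dominance of `St`. -/
lemma col_eq_of_isPure (hA : Assumption1 A S) (hAt : Assumption1 At St)
    (hcov : EqOffDiag (A * S * Aᵀ) (At * St * Atᵀ)) (hjl : j ≠ l)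
    (hj : IsPure (A j) k) (hl : IsPure (A l) k) (hj' : IsPure (At j) c)
    (hl' : IsPure (At l) c') : c = c' := by
  by_contra hcc
  have hlt : |(At * St * Atᵀ) j l| < S k k := by
    rw [abs_cov_apply_of_isPure hj' hl', ← diag_eq_of_isPure hA hAt hcov hl hl']
    exact hAt.abs_apply_lt_diag hcc
  rw [← hcov j l hjl, abs_cov_apply_of_isPure hj hl, abs_of_pos (hA.diag_pos k)] at hlt
  exact hlt.false

lemma exists_isPure_of_isPure (hA : Assumption1 A S) (hAt : Assumption1 At St)
    (hcov : EqOffDiag (A * S * Aᵀ) (At * St * Atᵀ)) (hj : IsPure (A j) k) :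
    ∃ c, IsPure (At j) c := by
  obtain ⟨l, hlj, hl⟩ := hA.exists_isPure_ne k j
  choose q hql hq using fun c => hAt.exists_isPure_ne c l
  have hv : ∀ c, |(St *ᵥ At l) c| = |(A * S * Aᵀ) (q c) l| := fun c => by
    rw [hcov _ _ (hql c), mul_mul_transpose_apply, (hq c).abs_dotProduct]
  have huniq : ∀ c c', |(St *ᵥ At l) c| = S k k → |(St *ᵥ At l) c'| = S k k → c = c' := by
    intro c c' hc hc'
    have hqc := hA.isPure_of_diag_le_abs_cov hl (hv c ▸ hc.ge)
    have hqc' := hA.isPure_of_diag_le_abs_cov hl (hv c' ▸ hc'.ge)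
    by_cases hqq : q c = q c'
    · exact (hq c).unique (hqq ▸ hq c')
    · exact col_eq_of_isPure hA hAt hcov hqq hqc hqc' (hq c) (hq c')
  have hjl : S k k ≤ |At j ⬝ᵥ (St *ᵥ At l)| := by
    rw [← mul_mul_transpose_apply, ← hcov j l hlj.symm, abs_cov_apply_of_isPure hj hl,
      abs_of_pos (hA.diag_pos k)]
  obtain ⟨c, -, hc⟩ := exists_isPure_of_le_abs_dotProduct (hAt.sum_abs_le j)
    (fun c => (hv c).trans_le (hA.abs_cov_le hl _)) (hA.diag_pos k) huniq hjl
  exact ⟨c, hc⟩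

lemma sign_eq_of_isPure (hA : Assumption1 A S) (hAt : Assumption1 At St)
    (hcov : EqOffDiag (A * S * Aᵀ) (At * St * Atᵀ))
    (hi : IsPure (A i) k) (hj : IsPure (A j) k) (hi' : IsPure (At i) c)
    (hj' : IsPure (At j) c) : At i c * A i k = At j c * A j k := by
  rcases eq_or_ne i j with rfl | hij
  · rfl
  have hij' := hcov i j hij
  rw [cov_apply_of_isPure hi hj, cov_apply_of_isPure hi' hj',
    diag_eq_of_isPure hA hAt hcov hj hj'] at hij'
  have hprod : A i k * A j k = At i c * At j c :=
    mul_right_cancel₀ (hA.diag_pos k).ne' (by linear_combination hij')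
  linear_combination (-(A i k * At j c)) * hprod + (A j k * At j c) * hi.mul_self
    - (At i c * A i k) * hj'.mul_self

lemma exists_matchesPureRows (hA : Assumption1 A S) (hAt : Assumption1 At St)
    (hcov : EqOffDiag (A * S * Aᵀ) (At * St * Atᵀ)) :
    ∃ (π : Fin K ≃ Fin K) (ε : Fin K → ℝ), (∀ k, ε k * ε k = 1) ∧ MatchesPureRows A At π ε := by
  choose j hj using hA.exists_isPure
  choose π hπ using fun k => exists_isPure_of_isPure hA hAt hcov (hj k)
  have hpure : ∀ k i, IsPure (A i) k → IsPure (At i) (π k) := by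
    intro k i hi
    obtain ⟨c, hc⟩ := exists_isPure_of_isPure hA hAt hcov hi
    rcases eq_or_ne i (j k) with rfl | hij
    · exact hπ k
    · exact col_eq_of_isPure hA hAt hcov hij hi (hj k) hc (hπ k) ▸ hc
  have hinj : Function.Injective π := by
    intro k k' hkk
    rcases eq_or_ne (j k) (j k') with hjj | hjj
    · exact (hj k).unique (hjj ▸ hj k')
    · exact col_eq_of_isPure hAt hA hcov.symm hjj (hπ k) (hkk ▸ hπ k') (hj k) (hj k')
  refine ⟨Equiv.ofBijective π hinj.bijective_of_finite, fun k => At (j k) (π k) * A (j k) k,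
    fun k => ?_, fun k i hi => ⟨hpure k i hi, ?_⟩⟩
  · linear_combination (A (j k) k * A (j k) k) * (hπ k).mul_self + (hj k).mul_self
  · have hsign := sign_eq_of_isPure hA hAt hcov (hj k) hi (hπ k) (hpure k i hi)
    simp only [Equiv.ofBijective_apply, hsign]
    linear_combination (-At i (π k)) * hi.mul_self

variable {π : Fin K ≃ Fin K} {ε : Fin K → ℝ}

lemma MatchesPureRows.apply_eq (hm : MatchesPureRows A At π ε) {x y : Fin K → ℝ}
    (hi : IsPure (A i) k) (h : A i ⬝ᵥ x = At i ⬝ᵥ y) : x k = ε k * y (π k) :=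
  hi.apply_eq_of_dotProduct_eq (hm k i hi).1 (hm k i hi).2 h

lemma mulVec_apply_eq_of_matchesPureRows (hA : Assumption1 A S)
    (hcov : EqOffDiag (A * S * Aᵀ) (At * St * Atᵀ)) (hm : MatchesPureRows A At π ε)
    (j : Fin p) (k : Fin K) :
    (S *ᵥ A j) k = ε k * (St *ᵥ At j) (π k) := by
  obtain ⟨i, hij, hi⟩ := hA.exists_isPure_ne k j
  exact hm.apply_eq hi (by simpa only [mul_mul_transpose_apply] using hcov i j hij)

lemma mulVec_apply_eq_of_mul_mulVec_eq (hA : Assumption1 A S) (hm : MatchesPureRows A At π ε)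
    {β βt : Fin K → ℝ} (h : (A * S) *ᵥ β = (At * St) *ᵥ βt) (k : Fin K) :
    (S *ᵥ β) k = ε k * (St *ᵥ βt) (π k) := by
  obtain ⟨i, hi⟩ := hA.exists_isPure k
  have hrow := congrFun h i
  rw [← mulVec_mulVec, ← mulVec_mulVec] at hrow
  exact hm.apply_eq hi hrow

lemma apply_equiv_equiv_of_matchesPureRows (hA : Assumption1 A S)
    (hcov : EqOffDiag (A * S * Aᵀ) (At * St * Atᵀ)) (hε : ∀ k, ε k * ε k = 1)
    (hm : MatchesPureRows A At π ε) (k k' : Fin K) :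
    St (π k) (π k') = ε k * ε k' * S k k' := by
  obtain ⟨j, hj⟩ := hA.exists_isPure k'
  obtain ⟨hj', hsign⟩ := hm k' j hj
  have hrow := mulVec_apply_eq_of_matchesPureRows hA hcov hm j k
  rw [hj.mulVec_apply, hj'.mulVec_apply, hsign] at hrow
  have hS : S k k' = ε k * ε k' * St (π k) (π k') :=
    mul_right_cancel₀ hj.apply_ne_zero (by linear_combination hrow)
  linear_combination (-(ε k * ε k')) * hS - St (π k) (π k') * hε k
    - (St (π k) (π k') * ε k * ε k) * hε k'

end TwoModels

theorem identifiability_of_beta_general {p K : ℕ}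
    (A At : Matrix (Fin p) (Fin K) ℝ)
    (S St : Matrix (Fin K) (Fin K) ℝ)
    (Γ Γt : Matrix (Fin p) (Fin p) ℝ)
    (β βt : Fin K → ℝ)
    (hA : Assumption1 A S) (hAt : Assumption1 At St)
    (hΓdiag : Γ.IsDiag)
    (hΓtdiag : Γt.IsDiag)
    (hSig : A * S * Aᵀ + Γ = At * St * Atᵀ + Γt)
    (hXY : (A * S).mulVec β = (At * St).mulVec βt) :
    ∃ P : Matrix (Fin K) (Fin K) ℝ, IsSignedPermMatrix P ∧
      At = A * P ∧ St = Pᵀ * S * P ∧ βt = Pᵀ.mulVec β := by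
  have hcov : EqOffDiag (A * S * Aᵀ) (At * St * Atᵀ) := fun i j hij => by
    simpa [hΓdiag hij, hΓtdiag hij] using congrFun (congrFun hSig i) j
  obtain ⟨π, ε, hε, hm⟩ := exists_matchesPureRows hA hAt hcov
  have hSt := apply_equiv_equiv_of_matchesPureRows hA hcov hε hm
  have hAt_apply : ∀ j k, At j (π k) = ε k * A j k := fun j =>
    apply_equiv_eq_of_mulVec hA.posDef hε hSt (mulVec_apply_eq_of_matchesPureRows hA hcov hm j)
  have hβt : ∀ k, βt (π k) = ε k * β k :=
    apply_equiv_eq_of_mulVec hA.posDef hε hSt (mulVec_apply_eq_of_mul_mulVec_eq hA hm hXY)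
  refine ⟨signedPermMatrix π ε, isSignedPermMatrix_signedPermMatrix π hε, ?_, ?_, ?_⟩
  · ext j c
    obtain ⟨k, rfl⟩ := π.surjective c
    rw [mul_signedPermMatrix_apply, hAt_apply, mul_comm]
  · ext c c'
    obtain ⟨k, rfl⟩ := π.surjective c
    obtain ⟨k', rfl⟩ := π.surjective c'
    rw [Matrix.mul_assoc, transpose_signedPermMatrix_mul_apply, mul_signedPermMatrix_apply, hSt]
    ring
  · funext c
    obtain ⟨k, rfl⟩ := π.surjective c
    rw [transpose_signedPermMatrix_mulVec_apply, hβt]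

/-- Proposition 1: identifiability of the regression coefficient `β` (together with `A`
and `Σ_Z`) from the covariance quantities `A Σ_Z Aᵀ + Γ` and `A Σ_Z β`, up to a signed
permutation. -/
theorem identifiability_of_beta {p K : ℕ}
    (A At : Matrix (Fin p) (Fin K) ℝ)
    (S St : Matrix (Fin K) (Fin K) ℝ)
    (Γ Γt : Matrix (Fin p) (Fin p) ℝ)
    (β βt : Fin K → ℝ)
    (hA : Assumption1 A S) (hAt : Assumption1 At St)
    (hΓdiag : Γ.IsDiag) (hΓ : Γ.PosSemidef)
    (hΓtdiag : Γt.IsDiag) (hΓt : Γt.PosSemidef)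
    (hSig : A * S * Aᵀ + Γ = At * St * Atᵀ + Γt)
    (hXY : (A * S).mulVec β = (At * St).mulVec βt) :
    ∃ P : Matrix (Fin K) (Fin K) ℝ, IsSignedPermMatrix P ∧
      At = A * P ∧ St = Pᵀ * S * P ∧ βt = Pᵀ.mulVec β :=
  identifiability_of_beta_general A At S St Γ Γt β βt hA hAt hΓdiag hΓtdiag hSig hXY
end

section
/- Identifiability of A when Γ is known (Corollary A.1). Let A, Ã ∈ ℝ^{p×K} and Σ_Z, Σ̃_Z ∈ ℝ^{K×K} be such that: every row of A and of Ã has ℓ1-norm at most 1; for each k ∈ {1,…,K} there exists an index i with A_{i·} = e_k, and there exists an index ĩ with Ã_{ĩ·} = e_k; and both Σ_Z and Σ̃_Z are symmetric positive definite and satisfy the separation condition min_{1≤a<b≤K}( min(diagonal entries a and b) − |off-diagonal entry (a,b)| ) > ν for some ν > 0. If A Σ_Z Aᵀ = Ã Σ̃_Z Ãᵀ, then there exists a K×K signed permutation matrix P such that Ã = A P and Σ̃_Z = Pᵀ Σ_Z P. -/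
set_option maxHeartbeats 1000000


open Matrix

/-- Corollary A.1: identifiability of `A` (and `Σ_Z`) from `A Σ_Z Aᵀ`, up to a signed
permutation, under the weaker pure variable assumption (A1') requiring at least one
pure row per factor. -/
theorem identifiability_of_A_known_Gamma {p K : ℕ}
    (A At : Matrix (Fin p) (Fin K) ℝ)
    (S St : Matrix (Fin K) (Fin K) ℝ)
    (hA0 : ∀ j, ∑ k, |A j k| ≤ 1)
    (hAt0 : ∀ j, ∑ k, |At j k| ≤ 1)
    (hA1 : ∀ k : Fin K, ∃ i : Fin p, ∀ a, A i a = if a = k then 1 else 0)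
    (hAt1 : ∀ k : Fin K, ∃ i : Fin p, ∀ a, At i a = if a = k then 1 else 0)
    (hS : S.PosDef) (hSt : St.PosDef)
    (hSsep : ∃ ν > (0 : ℝ), ∀ a b : Fin K, a < b → min (S a a) (S b b) - |S a b| > ν)
    (hStsep : ∃ ν > (0 : ℝ), ∀ a b : Fin K, a < b → min (St a a) (St b b) - |St a b| > ν)
    (h : A * S * Aᵀ = At * St * Atᵀ) :
    ∃ P : Matrix (Fin K) (Fin K) ℝ, IsSignedPermMatrix P ∧
      At = A * P ∧ St = Pᵀ * S * P := by
  classical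
  choose f hf using hA1
  choose g hg using hAt1
  have hSdet : IsUnit S.det := isUnit_iff_ne_zero.mpr (ne_of_gt hS.det_pos)
  have hStdet : IsUnit St.det := isUnit_iff_ne_zero.mpr (ne_of_gt hSt.det_pos)
  set R : Matrix (Fin K) (Fin p) ℝ := Matrix.of (fun a j => if j = f a then 1 else 0) with hRdef
  set Rt : Matrix (Fin K) (Fin p) ℝ := Matrix.of (fun a j => if j = g a then 1 else 0) with hRtdef
  have hRmul : ∀ (M : Matrix (Fin p) (Fin K) ℝ) (a : Fin K) (b : Fin K),
      (R * M) a b = M (f a) b := by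
    intro M a b
    simp [hRdef, Matrix.mul_apply]
  have hRtmul : ∀ (M : Matrix (Fin p) (Fin K) ℝ) (a : Fin K) (b : Fin K),
      (Rt * M) a b = M (g a) b := by
    intro M a b
    simp [hRtdef, Matrix.mul_apply]
  have hRA : R * A = 1 := by
    ext a b
    rw [hRmul, hf a b, Matrix.one_apply]
    simp [eq_comm]
  have hRtAt : Rt * At = 1 := by
    ext a b
    rw [hRtmul, hg a b, Matrix.one_apply]
    simp [eq_comm]
  set D : Matrix (Fin K) (Fin K) ℝ := R * At with hDdef
  set C : Matrix (Fin K) (Fin K) ℝ := Rt * A with hCdef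
  -- e1 : S * Aᵀ = D * St * Atᵀ
  have e1 : S * Aᵀ = D * St * Atᵀ := by
    have := congrArg (fun M => R * M) h
    simpa only [← Matrix.mul_assoc, hRA, Matrix.one_mul] using this
  -- e2 : St * Atᵀ = C * S * Aᵀ
  have e2 : St * Atᵀ = C * S * Aᵀ := by
    have := congrArg (fun M => Rt * M) h.symm
    simpa only [← Matrix.mul_assoc, hRtAt, Matrix.one_mul] using this
  have hAR : Aᵀ * Rᵀ = 1 := by
    rw [← Matrix.transpose_mul, hRA, Matrix.transpose_one]
  have hAtRt : Atᵀ * Rtᵀ = 1 := by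
    rw [← Matrix.transpose_mul, hRtAt, Matrix.transpose_one]
  have hAtR : Atᵀ * Rᵀ = Dᵀ := by
    rw [← Matrix.transpose_mul, hDdef]
  have hARt : Aᵀ * Rtᵀ = Cᵀ := by
    rw [← Matrix.transpose_mul, hCdef]
  -- e3 : S = D * St * Dᵀ
  have e3 : S = D * St * Dᵀ := by
    have := congrArg (fun M => M * Rᵀ) e1
    simpa only [Matrix.mul_assoc, hAR, hAtR, Matrix.mul_one] using this
  -- e6 : C * S = St * Dᵀ
  have e6 : St * Dᵀ = C * S := by
    have := congrArg (fun M => M * Rᵀ) e2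
    simpa only [Matrix.mul_assoc, hAR, hAtR, Matrix.mul_one] using this
  -- D * C = 1
  have hDC : D * C = 1 := by
    have h5 : (D * C) * (S * Aᵀ) = S * Aᵀ := by
      calc (D * C) * (S * Aᵀ) = D * (C * S * Aᵀ) := by simp only [Matrix.mul_assoc]
        _ = D * (St * Atᵀ) := by rw [← e2]
        _ = S * Aᵀ := by rw [← Matrix.mul_assoc, ← e1]
    have h6 : D * (C * S) = S := by
      have := congrArg (fun M => M * Rᵀ) h5
      simpa only [Matrix.mul_assoc, hAR, Matrix.mul_one] using this
    calc D * C = (D * C) * S * S⁻¹ := (Matrix.mul_nonsing_inv_cancel_right S _ hSdet).symm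
      _ = D * (C * S) * S⁻¹ := by rw [Matrix.mul_assoc D C S]
      _ = S * S⁻¹ := by rw [h6]
      _ = 1 := Matrix.mul_nonsing_inv S hSdet
  -- C * D = 1
  have hCD : C * D = 1 := mul_eq_one_comm.mp hDC
  -- row sums
  have hDrow : ∀ a, ∑ b, |D a b| ≤ 1 := by
    intro a
    have : ∀ b, D a b = At (f a) b := fun b => hRmul At a b
    simp only [this]
    exact hAt0 (f a)
  have hCrow : ∀ a, ∑ b, |C a b| ≤ 1 := by
    intro a
    have : ∀ b, C a b = A (g a) b := fun b => hRtmul A a b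
    simp only [this]
    exact hA0 (g a)
  have hCabs : ∀ k b, |C k b| ≤ 1 := by
    intro k b
    calc |C k b| ≤ ∑ b', |C k b'| :=
          Finset.single_le_sum (f := fun b' => |C k b'|) (fun i _ => abs_nonneg _) (Finset.mem_univ b)
      _ ≤ 1 := hCrow k
  -- key combinatorial fact
  have key : ∀ a, ∃ k, D a k ≠ 0 ∧ (∀ b, b ≠ k → D a b = 0) ∧ |D a k| = 1 ∧ C k a ≠ 0 := by
    intro a
    have hsum1 : ∑ k, D a k * C k a = 1 := by
      have : (D * C) a a = (1 : Matrix (Fin K) (Fin K) ℝ) a a := by rw [hDC]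
      simpa [Matrix.mul_apply, Matrix.one_apply] using this
    have hle : ∀ k ∈ Finset.univ, D a k * C k a ≤ |D a k| := by
      intro k _
      calc D a k * C k a ≤ |D a k * C k a| := le_abs_self _
        _ = |D a k| * |C k a| := abs_mul _ _
        _ ≤ |D a k| * 1 := mul_le_mul_of_nonneg_left (hCabs k a) (abs_nonneg _)
        _ = |D a k| := mul_one _
    have hsumabs : ∑ k, |D a k| = 1 := by
      have h1 : (1 : ℝ) ≤ ∑ k, |D a k| := by
        rw [← hsum1]; exact Finset.sum_le_sum hle
      linarith [hDrow a]
    have heq : ∀ k ∈ Finset.univ, D a k * C k a = |D a k| := by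
      apply (Finset.sum_eq_sum_iff_of_le hle).mp
      rw [hsum1, hsumabs]
    -- existence of a nonzero entry
    have hex : ∃ k, D a k ≠ 0 := by
      by_contra hc
      push_neg at hc
      simp [hc] at hsumabs
    obtain ⟨k, hk⟩ := hex
    -- |C k a| = 1
    have hCka : |C k a| = 1 := by
      have h1 : |D a k| = D a k * C k a := (heq k (Finset.mem_univ k)).symm
      have h2 : D a k * C k a ≤ |D a k| * |C k a| := by
        calc D a k * C k a ≤ |D a k * C k a| := le_abs_self _
          _ = |D a k| * |C k a| := abs_mul _ _
      have hpos : 0 < |D a k| := abs_pos.mpr hk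
      have : 1 ≤ |C k a| := by
        nlinarith
      linarith [hCabs k a]
    have hCk0 : ∀ b, b ≠ a → C k b = 0 := by
      intro b hb
      have hsplit : |C k a| + ∑ b' ∈ Finset.univ.erase a, |C k b'| = ∑ b', |C k b'| :=
        Finset.add_sum_erase _ (fun b' => |C k b'|) (Finset.mem_univ a)
      have hz : ∑ b' ∈ Finset.univ.erase a, |C k b'| ≤ 0 := by
        have := hCrow k
        rw [← hsplit, hCka] at this
        linarith
      have hzz : ∑ b' ∈ Finset.univ.erase a, |C k b'| = 0 :=
        le_antisymm hz (Finset.sum_nonneg fun i _ => abs_nonneg _)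
      have := (Finset.sum_eq_zero_iff_of_nonneg (fun i _ => abs_nonneg _)).mp hzz b
        (Finset.mem_erase.mpr ⟨hb, Finset.mem_univ b⟩)
      exact abs_eq_zero.mp this
    -- unique nonzero in row a
    have huniq : ∀ b, b ≠ k → D a b = 0 := by
      intro b hb
      by_contra hDb
      -- then C b . = ± e_a as well  (apply same argument to b)
      have hCba : |C b a| = 1 := by
        have h1 : |D a b| = D a b * C b a := (heq b (Finset.mem_univ b)).symm
        have h2 : D a b * C b a ≤ |D a b| * |C b a| := by
          calc D a b * C b a ≤ |D a b * C b a| := le_abs_self _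
            _ = |D a b| * |C b a| := abs_mul _ _
        have hpos : 0 < |D a b| := abs_pos.mpr hDb
        have : 1 ≤ |C b a| := by nlinarith
        linarith [hCabs b a]
      have hCb0 : ∀ b', b' ≠ a → C b b' = 0 := by
        intro b' hb'
        have hsplit : |C b a| + ∑ b'' ∈ Finset.univ.erase a, |C b b''| = ∑ b'', |C b b''| :=
          Finset.add_sum_erase _ (fun b'' => |C b b''|) (Finset.mem_univ a)
        have hz : ∑ b'' ∈ Finset.univ.erase a, |C b b''| ≤ 0 := by
          have := hCrow b
          rw [← hsplit, hCba] at this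
          linarith
        have hzz : ∑ b'' ∈ Finset.univ.erase a, |C b b''| = 0 :=
          le_antisymm hz (Finset.sum_nonneg fun i _ => abs_nonneg _)
        have := (Finset.sum_eq_zero_iff_of_nonneg (fun i _ => abs_nonneg _)).mp hzz b'
          (Finset.mem_erase.mpr ⟨hb', Finset.mem_univ b'⟩)
        exact abs_eq_zero.mp this
      -- contradiction with (C * D) b k = 0
      have hCDbk : (C * D) b k = 0 := by
        rw [hCD, Matrix.one_apply]
        simp [hb]
      have : (C * D) b k = C b a * D a k := by
        rw [Matrix.mul_apply]
        refine Finset.sum_eq_single a (fun c _ hc => ?_) (fun hna => absurd (Finset.mem_univ a) hna)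
        rw [hCb0 c hc, zero_mul]
      rw [this] at hCDbk
      have hCba' : C b a ≠ 0 := by
        intro hz; rw [hz] at hCba; simp at hCba
      exact hk (by
        rcases mul_eq_zero.mp hCDbk with h' | h'
        · exact absurd h' hCba'
        · exact h')
    -- |D a k| = 1
    have hDak : |D a k| = 1 := by
      have : ∑ b, |D a b| = |D a k| := by
        refine Finset.sum_eq_single k (fun b _ hb => ?_) (fun hna => absurd (Finset.mem_univ k) hna)
        rw [huniq b hb, abs_zero]
      rw [this] at hsumabs
      exact hsumabs
    have hCka' : C k a ≠ 0 := by
      intro hz; rw [hz] at hCka; simp at hCka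
    exact ⟨k, hk, huniq, hDak, hCka'⟩
  choose σ hσ using key
  have hσinj : Function.Injective σ := by
    intro a₁ a₂ hσeq
    by_contra hne
    have hDC0 : (D * C) a₁ a₂ = 0 := by
      rw [hDC, Matrix.one_apply]
      simp [hne]
    have : (D * C) a₁ a₂ = D a₁ (σ a₁) * C (σ a₁) a₂ := by
      rw [Matrix.mul_apply]
      refine Finset.sum_eq_single (σ a₁) (fun b _ hb => ?_)
        (fun hna => absurd (Finset.mem_univ _) hna)
      rw [(hσ a₁).2.1 b hb, zero_mul]
    rw [this] at hDC0
    rcases mul_eq_zero.mp hDC0 with h' | h'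
    · exact (hσ a₁).1 h'
    · rw [hσeq] at h'
      exact (hσ a₂).2.2.2 h'
  have hσsurj : Function.Surjective σ := (Finite.injective_iff_bijective.mp hσinj).2
  -- D is a signed permutation matrix
  have hDnz : ∀ a b, D a b ≠ 0 → b = σ a := by
    intro a b hb
    by_contra hne
    exact hb ((hσ a).2.1 b hne)
  have hsigned : IsSignedPermMatrix D := by
    refine ⟨fun i => ⟨σ i, (hσ i).1, fun j hj => hDnz i j hj⟩, fun j => ?_, fun i j hij => ?_⟩
    · obtain ⟨i, hi⟩ := hσsurj j
      refine ⟨i, by rw [← hi] at *; exact (hσ i).1, fun i' hi' => ?_⟩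
      have := hDnz i' j hi'
      exact hσinj (by rw [← this, hi])
    · have := hDnz i j hij
      subst this
      exact (abs_eq zero_le_one).mp (hσ i).2.2.1
  -- Dᵀ * D = 1
  have hDDT : D * Dᵀ = 1 := by
    ext a b
    rw [Matrix.mul_apply, Matrix.one_apply]
    by_cases hab : a = b
    · subst hab
      simp only [if_pos rfl]
      have : ∀ k, D a k * Dᵀ k a = if k = σ a then D a k * D a k else 0 := by
        intro k
        by_cases hk : k = σ a
        · simp [hk, Matrix.transpose_apply]
        · simp [hk, (hσ a).2.1 k hk, Matrix.transpose_apply]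
      rw [Finset.sum_congr rfl (fun k _ => this k)]
      rw [Finset.sum_ite_eq' Finset.univ (σ a) (fun k => D a k * D a k)]
      simp only [Finset.mem_univ, if_pos]
      have h1 : |D a (σ a)| = 1 := (hσ a).2.2.1
      nlinarith [sq_abs (D a (σ a))]
    · simp only [if_neg hab]
      apply Finset.sum_eq_zero
      intro k _
      by_cases hk : k = σ a
      · have hkb : k ≠ σ b := by
          intro hkb
          exact hab (hσinj (hk ▸ hkb : σ a = σ b).symm ▸ rfl)
        rw [Matrix.transpose_apply, (hσ b).2.1 k hkb, mul_zero]
      · rw [(hσ a).2.1 k hk, zero_mul]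
  have hDTD : Dᵀ * D = 1 := mul_eq_one_comm.mp hDDT
  -- At = A * D
  have hAt : At = A * D := by
    have hst : St * Atᵀ = St * (Dᵀ * Aᵀ) := by
      rw [e2, ← Matrix.mul_assoc, ← e6, Matrix.mul_assoc]
    have : Atᵀ = Dᵀ * Aᵀ := by
      calc Atᵀ = St⁻¹ * (St * Atᵀ) := (Matrix.nonsing_inv_mul_cancel_left St _ hStdet).symm
        _ = St⁻¹ * (St * (Dᵀ * Aᵀ)) := by rw [hst]
        _ = Dᵀ * Aᵀ := Matrix.nonsing_inv_mul_cancel_left St _ hStdet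
    have := congrArg Matrix.transpose this
    simpa [Matrix.transpose_mul] using this
  -- St = Dᵀ * S * D
  have hStfin : St = Dᵀ * S * D := by
    rw [e3]
    calc St = 1 * St * 1 := by rw [Matrix.one_mul, Matrix.mul_one]
      _ = (Dᵀ * D) * St * (Dᵀ * D) := by rw [hDTD]
      _ = Dᵀ * (D * St * Dᵀ) * D := by simp only [Matrix.mul_assoc]
  exact ⟨D, hsigned, hAt, hStfin⟩
end

section
/- Recovery of Θ = AΣ_Z from Σ and the pure variables (identity (11) in the paper). Let A ∈ ℝ^{p×K}, Σ_Z ∈ ℝ^{K×K}, and Γ a p×p diagonal matrix, and set Σ = A Σ_Z Aᵀ + Γ. Suppose there are pairwise disjoint nonempty sets I_1,…,I_K ⊆ {1,…,p} such that for every k and every i ∈ I_k the i-th row of A equals s_i e_k for some sign s_i ∈ {−1,1}. Let I = ∪_k I_k, and let A_{I·}, Σ_{·I}, Γ_{·I} denote respectively the |I|×K submatrix of rows of A indexed by I and the p×|I| submatrices of columns of Σ and Γ indexed by I. Then A_{I·}ᵀ A_{I·} is invertible and (Σ_{·I} − Γ_{·I}) A_{I·} (A_{I·}ᵀ A_{I·})^{-1}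 = A Σ_Z. -/
open Matrix

noncomputable section

/-- The submatrix of `A` keeping only the rows with index in `I`. -/
def rowsSub {p K : ℕ} (A : Matrix (Fin p) (Fin K) ℝ) (I : Finset (Fin p)) :
    Matrix {x // x ∈ I} (Fin K) ℝ :=
  A.submatrix Subtype.val id

/-- The submatrix of a `p × p` matrix `M` keeping only the columns with index in `I`. -/
def colsSub {p : ℕ} (M : Matrix (Fin p) (Fin p) ℝ) (I : Finset (Fin p)) :
    Matrix (Fin p) {x // x ∈ I} ℝ :=
  M.submatrix id Subtype.val

/-- Identity (11): recovery of `Θ = A Σ_Z` from `Σ = A Σ_Z Aᵀ + Γ` and the pure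
variables:  `(Σ_{·I} − Γ_{·I}) A_{I·} (A_{I·}ᵀ A_{I·})⁻¹ = A Σ_Z`. -/
theorem theta_recovery {p K : ℕ}
    (A : Matrix (Fin p) (Fin K) ℝ) (S : Matrix (Fin K) (Fin K) ℝ)
    (Γ : Matrix (Fin p) (Fin p) ℝ) (hΓ : Γ.IsDiag)
    (I : Fin K → Finset (Fin p))
    (hdisj : ∀ a b, a ≠ b → Disjoint (I a) (I b))
    (hne : ∀ k, (I k).Nonempty)
    (hpure : ∀ k, ∀ i ∈ I k, ∃ s : ℝ, (s = 1 ∨ s = -1) ∧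
      ∀ a, A i a = if a = k then s else 0) :
    IsUnit ((rowsSub A (Finset.univ.biUnion I))ᵀ * rowsSub A (Finset.univ.biUnion I)) ∧
    (colsSub (A * S * Aᵀ + Γ) (Finset.univ.biUnion I) - colsSub Γ (Finset.univ.biUnion I))
        * rowsSub A (Finset.univ.biUnion I)
        * ((rowsSub A (Finset.univ.biUnion I))ᵀ * rowsSub A (Finset.univ.biUnion I))⁻¹
      = A * S := by
  set J := Finset.univ.biUnion I with hJ
  set B := rowsSub A J with hB
  -- Step 1: `Bᵀ * B` is diagonal with entries `(I k).card`.
  have hD : Bᵀ * B = Matrix.diagonal (fun k => ((I k).card : ℝ)) := by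
    ext k l
    have key : ∀ m, (∑ i ∈ I m, A i k * A i l)
        = if k = m ∧ l = m then ((I m).card : ℝ) else 0 := by
      intro m
      by_cases hkm : k = m
      · by_cases hlm : l = m
        · rw [if_pos ⟨hkm, hlm⟩, hkm, hlm]
          have hone : ∀ i ∈ I m, A i m * A i m = 1 := by
            intro i hi
            obtain ⟨s, hs, hrow⟩ := hpure m i hi
            rw [hrow m, if_pos rfl]
            rcases hs with h | h <;> simp [h]
          rw [Finset.sum_congr rfl hone, Finset.sum_const, nsmul_eq_mul, mul_one]
        · rw [if_neg (by tauto)]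
          refine Finset.sum_eq_zero fun i hi => ?_
          obtain ⟨s, hs, hrow⟩ := hpure m i hi
          rw [hrow l, if_neg hlm, mul_zero]
      · rw [if_neg (by tauto)]
        refine Finset.sum_eq_zero fun i hi => ?_
        obtain ⟨s, hs, hrow⟩ := hpure m i hi
        rw [hrow k, if_neg hkm, zero_mul]
    have : (Bᵀ * B) k l = ∑ i ∈ J, A i k * A i l := by
      rw [Matrix.mul_apply]
      simp only [hB, rowsSub, Matrix.transpose_apply, Matrix.submatrix_apply, id]
      exact Finset.sum_coe_sort J (fun i => A i k * A i l)
    rw [this, hJ, Finset.sum_biUnion]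
    · simp only [key]
      by_cases hkl : k = l
      · subst hkl
        simp [Matrix.diagonal_apply_eq]
      · rw [Matrix.diagonal_apply_ne _ hkl]
        refine Finset.sum_eq_zero fun m _ => ?_
        rw [if_neg]
        rintro ⟨rfl, rfl⟩; exact hkl rfl
    · intro a _ b _ hab
      exact hdisj a b hab
  have hdet : (Bᵀ * B).det ≠ 0 := by
    rw [hD, Matrix.det_diagonal]
    refine Finset.prod_ne_zero_iff.2 fun k _ => ?_
    exact Nat.cast_ne_zero.2 (Finset.card_ne_zero_of_mem (hne k).choose_spec)
  refine ⟨(Matrix.isUnit_iff_isUnit_det _).2 (isUnit_iff_ne_zero.2 hdet), ?_⟩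
  have hcols : colsSub (A * S * Aᵀ + Γ) J - colsSub Γ J = A * S * Bᵀ := by
    ext i j
    simp only [colsSub, Matrix.sub_apply, Matrix.submatrix_apply, Matrix.add_apply, id,
      add_sub_cancel_right]
    rw [Matrix.mul_apply, Matrix.mul_apply]
    refine Finset.sum_congr rfl fun a _ => ?_
    simp [hB, rowsSub]
  rw [hcols, Matrix.mul_assoc (A * S), Matrix.mul_assoc (A * S),
    Matrix.mul_nonsing_inv _ (isUnit_iff_ne_zero.2 hdet), Matrix.mul_one]
end
end

section
/- Upper bound on the signal strength (Lemma C.8). Let A ∈ ℝ^{p×K} (p, K ≥ 1) with every row of A having ℓ1-norm at most 1, and let Σ_Z be a K×K symmetric positive semidefinite matrix whose entries satisfy max_{a,b} |[Σ_Z]_{ab}| ≤ B_z. Then the K-th largest eigenvalue of A Σ_Z Aᵀ, which equals the smallest eigenvalue of the K×K matrix Σ_Z^{1/2} Aᵀ A Σ_Z^{1/2}, satisfies λ_min( Σ_Z^{1/2} Aᵀ A Σ_Z^{1/2} ) ≤ B_z · p / K. -/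
open Matrix

section OldSqrt

open scoped ComplexOrder

/-- The positive semidefinite square root of a positive semidefinite matrix, as defined in
Mathlib (December 2024); Mathlib has since removed `Matrix.PosSemidef.sqrt`. -/
noncomputable def Matrix.PosSemidef.sqrt {n 𝕜 : Type*} [Fintype n] [RCLike 𝕜] [DecidableEq n]
    {A : Matrix n n 𝕜} (hA : A.PosSemidef) : Matrix n n 𝕜 :=
  hA.1.eigenvectorUnitary.1 * diagonal ((↑) ∘ (√·) ∘ hA.1.eigenvalues) *
  (star hA.1.eigenvectorUnitary : Matrix n n 𝕜)

end OldSqrt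

/-!
The trace of `Σ^{1/2} AᵀA Σ^{1/2}` equals `tr (Σ AᵀA) = ∑ⱼ aⱼᵀ Σ aⱼ` over the rows `aⱼ` of `A`,
and the entrywise bound on `Σ` gives `aⱼᵀ Σ aⱼ ≤ B_z ‖aⱼ‖₁² ≤ B_z`. Hence the `K` eigenvalues sum
to at most `B_z p`, and the smallest of them is at most `B_z p / K`.
-/

namespace Matrix

section Sqrt

open scoped ComplexOrder

theorem PosSemidef.sqrt_mul_self {n 𝕜 : Type*} [Fintype n] [RCLike 𝕜] [DecidableEq n]
    {A : Matrix n n 𝕜} (hA : A.PosSemidef) : hA.sqrt * hA.sqrt = A := by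
  conv_rhs => rw [hA.1.spectral_theorem, Unitary.conjStarAlgAut_apply]
  simp only [PosSemidef.sqrt, Matrix.mul_assoc]
  rw [← Matrix.mul_assoc (star _), Unitary.coe_star_mul_self, Matrix.one_mul,
    ← Matrix.mul_assoc (diagonal _), diagonal_mul_diagonal]
  congr 3
  funext i
  simp [← RCLike.ofReal_mul, Real.mul_self_sqrt (hA.eigenvalues_nonneg i)]

theorem PosSemidef.trace_sqrt_mul_mul_sqrt {n 𝕜 : Type*} [Fintype n] [RCLike 𝕜] [DecidableEq n]
    {S : Matrix n n 𝕜} (hS : S.PosSemidef) (X : Matrix n n 𝕜) :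
    (hS.sqrt * X * hS.sqrt).trace = (S * X).trace := by
  rw [trace_mul_cycle, hS.sqrt_mul_self]

end Sqrt

theorem IsHermitian.card_mul_le_trace {n : Type*} [Fintype n] [DecidableEq n]
    {M : Matrix n n ℝ} (hM : M.IsHermitian) {c : ℝ} (hc : ∀ i, c ≤ hM.eigenvalues i) :
    Fintype.card n * c ≤ M.trace := by
  rw [hM.trace_eq_sum_eigenvalues, ← nsmul_eq_mul, ← Finset.card_univ, ← Finset.sum_const]
  exact Finset.sum_le_sum fun i _ => hc i

variable {m n : Type*} [Fintype m] [Fintype n]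

theorem dotProduct_mulVec_le_of_abs_le {S : Matrix n n ℝ} {B : ℝ} (hS : ∀ a b, |S a b| ≤ B)
    (v : n → ℝ) : v ⬝ᵥ S *ᵥ v ≤ B * (∑ k, |v k|) ^ 2 := by
  calc v ⬝ᵥ S *ᵥ v = ∑ k, ∑ l, v k * S k l * v l := by
        simp only [dotProduct, mulVec, Finset.mul_sum, mul_assoc]
    _ ≤ ∑ k, ∑ l, B * (|v k| * |v l|) := by
        refine Finset.sum_le_sum fun k _ => Finset.sum_le_sum fun l _ => ?_
        calc v k * S k l * v l ≤ |v k * S k l * v l| := le_abs_self _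
          _ = |S k l| * (|v k| * |v l|) := by simp only [abs_mul]; ring
          _ ≤ B * (|v k| * |v l|) := by gcongr; exact hS k l
    _ = B * (∑ k, |v k|) ^ 2 := by
        rw [sq, Finset.sum_mul_sum, Finset.mul_sum]
        simp only [Finset.mul_sum]

theorem trace_mul_transpose_mul_self (S : Matrix n n ℝ) (A : Matrix m n ℝ) :
    (S * (Aᵀ * A)).trace = ∑ j, A j ⬝ᵥ S *ᵥ A j := by
  rw [trace_mul_cycle', ← Matrix.mul_assoc]
  simp only [trace, diag, mul_apply, transpose_apply, dotProduct, mulVec, Finset.mul_sum,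
    Finset.sum_mul, mul_assoc]
  exact Finset.sum_congr rfl fun j _ => Finset.sum_comm

theorem trace_mul_transpose_mul_self_le {S : Matrix n n ℝ} {B : ℝ} (hS : ∀ a b, |S a b| ≤ B)
    (hB : 0 ≤ B) {A : Matrix m n ℝ} (hA : ∀ j, ∑ k, |A j k| ≤ 1) :
    (S * (Aᵀ * A)).trace ≤ B * Fintype.card m := by
  rw [trace_mul_transpose_mul_self, mul_comm, ← nsmul_eq_mul, ← Finset.card_univ,
    ← Finset.sum_const]
  refine Finset.sum_le_sum fun j _ => (dotProduct_mulVec_le_of_abs_le hS (A j)).trans ?_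
  exact mul_le_of_le_one_right hB (pow_le_one₀ (by positivity) (hA j))

end Matrix

theorem signal_strength_upper_bound_general {p K : ℕ}
    (A : Matrix (Fin p) (Fin K) ℝ) (S : Matrix (Fin K) (Fin K) ℝ) (Bz : ℝ)
    (hS : S.PosSemidef) (hBz : ∀ a b, |S a b| ≤ Bz)
    (hA : ∀ j, ∑ k, |A j k| ≤ 1)
    (hM : (hS.sqrt * (Aᵀ * A) * hS.sqrt).IsHermitian)
    (lamK : ℝ) (hlam : IsLeast (Set.range hM.eigenvalues) lamK) :
    lamK ≤ Bz * p / K := by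
  obtain ⟨⟨i, -⟩, hleast⟩ := hlam
  have hBz0 : 0 ≤ Bz := (abs_nonneg _).trans (hBz i i)
  have htrace : (K : ℝ) * lamK ≤ Bz * p := by
    calc (K : ℝ) * lamK = Fintype.card (Fin K) * lamK := by rw [Fintype.card_fin]
      _ ≤ (hS.sqrt * (Aᵀ * A) * hS.sqrt).trace :=
        hM.card_mul_le_trace fun i => hleast ⟨i, rfl⟩
      _ = (S * (Aᵀ * A)).trace := hS.trace_sqrt_mul_mul_sqrt _
      _ ≤ Bz * p := by simpa using trace_mul_transpose_mul_self_le hBz hBz0 hA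
  rw [le_div_iff₀ (by exact_mod_cast i.pos)]
  linarith

/-- Lemma C.8: upper bound on the signal strength.  If every row of `A` has ℓ1-norm at
most 1 and the entries of the positive semidefinite matrix `Σ_Z` are bounded by `B_z`,
then the smallest eigenvalue of `Σ_Z^{1/2} Aᵀ A Σ_Z^{1/2}` (the `K`-th largest
eigenvalue of `A Σ_Z Aᵀ`) is at most `B_z · p / K`. -/
theorem signal_strength_upper_bound {p K : ℕ} (hp : 1 ≤ p) (hK : 1 ≤ K)
    (A : Matrix (Fin p) (Fin K) ℝ) (S : Matrix (Fin K) (Fin K) ℝ) (Bz : ℝ)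
    (hS : S.PosSemidef) (hBz : ∀ a b, |S a b| ≤ Bz)
    (hA : ∀ j, ∑ k, |A j k| ≤ 1)
    (hM : (hS.sqrt * (Aᵀ * A) * hS.sqrt).IsHermitian)
    (lamK : ℝ) (hlam : IsLeast (Set.range hM.eigenvalues) lamK) :
    lamK ≤ Bz * p / K :=
  signal_strength_upper_bound_general A S Bz hS hBz hA hM lamK hlam
end

section
/- Comparison inequality for the asymptotic variance terms (display (A.7) in the paper). Let Σ_Z be a K×K symmetric positive definite matrix, m ≥ 1 an integer, and A ∈ ℝ^{p×K} such that there exist pairwise disjoint sets I_1,…,I_K ⊆ {1,…,p}, each of cardinality exactly m, with the property that for every ℓ and every i ∈ I_ℓ the i-th row of A equals s_i e_ℓ for some sign s_i ∈ {−1,1}. Set Θ = A Σ_Z. Then Θᵀ Θ is invertible, and for every β ∈ ℝ^K and every k ∈ {1,…,K}: Σ_{ℓ=1}^K (β_ℓ²/m) Σ_{i∈I_ℓ} ( e_kᵀ (Θᵀ Θ)^{-1} Θᵀ ẽ_i )² ≤ (‖β‖₂² / m) · e_kᵀ (Θᵀ Θ)^{-1} e_k, where ẽ_i denotes the i-th canonical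 basis vector of ℝ^p and e_k the k-th canonical basis vector of ℝ^K. -/
/-!
Rows of `A` that are signed unit vectors force `A`, hence `Θ = A Σ_Z`, to be injective, so the
Gram matrix `ΘᵀΘ` is positive definite. The matrix `C = (ΘᵀΘ)⁻¹Θᵀ` satisfies `C Cᵀ = (ΘᵀΘ)⁻¹`,
so `e_kᵀ (ΘᵀΘ)⁻¹ e_k` is the full squared norm of the `k`-th row of `C`; the left side only sees
the disjoint blocks `I_ℓ` of that row, each with weight at most `‖β‖₂²/m`.
-/

open Function Matrix

namespace Matrix

variable {R m n : Type*}

theorem mulVec_injective_of_forall_row_eq_single [Ring R] [Fintype n] [DecidableEq n]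
    (A : Matrix m n R) (hA : ∀ l, ∃ i s, IsUnit s ∧ A i = Pi.single l s) :
    Injective A.mulVec := by
  intro v w hvw
  funext l
  obtain ⟨i, s, hs, hrow⟩ := hA l
  have row_mulVec (u : n → R) : (A *ᵥ u) i = s * u l := by
    rw [mulVec, dotProduct, hrow, Finset.sum_eq_single l] <;> simp_all
  exact hs.mul_left_cancel (by rw [← row_mulVec, ← row_mulVec, hvw])

theorem transpose_mul_self_inv_mul_transpose_mul_transpose [CommRing R] [Fintype m]
    [Fintype n] [DecidableEq n] (Θ : Matrix m n R) :
    (Θᵀ * Θ)⁻¹ * Θᵀ * ((Θᵀ * Θ)⁻¹ * Θᵀ)ᵀ = (Θᵀ * Θ)⁻¹ := by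
  by_cases h : IsUnit (Θᵀ * Θ).det
  · rw [transpose_mul, transpose_transpose, transpose_nonsing_inv, transpose_mul,
      transpose_transpose, Matrix.mul_assoc, ← Matrix.mul_assoc Θᵀ,
      mul_nonsing_inv _ h, Matrix.mul_one]
  · simp [nonsing_inv_apply_not_isUnit _ h]

theorem inv_transpose_mul_self_apply_self [CommRing R] [Fintype m] [Fintype n] [DecidableEq n]
    (Θ : Matrix m n R) (k : n) :
    (Θᵀ * Θ)⁻¹ k k = ∑ i, ((Θᵀ * Θ)⁻¹ * Θᵀ) k i ^ 2 := by
  conv_lhs => rw [← transpose_mul_self_inv_mul_transpose_mul_transpose Θ]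
  simp only [mul_apply, transpose_apply, sq]

end Matrix

theorem Finset.sum_mul_sum_le_sum_mul_sum_of_pairwise_disjoint {R ι κ : Type*}
    [Semiring R] [PartialOrder R] [IsOrderedRing R] [Fintype ι] [Fintype κ]
    (w : κ → R) (hw : 0 ≤ w) (f : ι → R) (hf : 0 ≤ f) (I : κ → Finset ι)
    (hI : Pairwise (Disjoint on I)) :
    ∑ l, w l * ∑ i ∈ I l, f i ≤ (∑ l, w l) * ∑ i, f i := by
  classical
  calc ∑ l, w l * ∑ i ∈ I l, f i
      ≤ ∑ l, (∑ l, w l) * ∑ i ∈ I l, f i := by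
        gcongr with l
        · exact sum_nonneg fun i _ => hf i
        · exact single_le_sum (fun l _ => hw l) (mem_univ l)
    _ = (∑ l, w l) * ∑ i ∈ univ.biUnion I, f i := by
        rw [← mul_sum, sum_biUnion fun a _ b _ hab => hI hab]
    _ ≤ (∑ l, w l) * ∑ i, f i := by
        gcongr
        · exact sum_nonneg fun l _ => hw l
        · exact fun i _ _ => hf i
        · exact subset_univ _

/-- Display (A.7): comparison inequality for the asymptotic variance terms.  With
`Θ = A Σ_Z` and pure variable sets `I₁, …, I_K` of common size `m`, the matrix `Θᵀ Θ`
is invertible and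
`∑_ℓ (β_ℓ²/m) ∑_{i ∈ I_ℓ} (e_kᵀ (ΘᵀΘ)⁻¹ Θᵀ ẽ_i)² ≤ (‖β‖₂²/m) e_kᵀ (ΘᵀΘ)⁻¹ e_k`. -/
theorem variance_comparison {p K : ℕ}
    (S : Matrix (Fin K) (Fin K) ℝ) (hS : S.PosDef)
    (m : ℕ) (hm : 1 ≤ m)
    (A : Matrix (Fin p) (Fin K) ℝ)
    (I : Fin K → Finset (Fin p))
    (hdisj : ∀ a b, a ≠ b → Disjoint (I a) (I b))
    (hcard : ∀ k, (I k).card = m)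
    (hpure : ∀ l, ∀ i ∈ I l, ∃ s : ℝ, (s = 1 ∨ s = -1) ∧
      ∀ a, A i a = if a = l then s else 0) :
    IsUnit ((A * S)ᵀ * (A * S)) ∧
    ∀ (β : Fin K → ℝ) (k : Fin K),
      ∑ l, (β l ^ 2 / m) *
          ∑ i ∈ I l, ((((A * S)ᵀ * (A * S))⁻¹ * (A * S)ᵀ) k i) ^ 2
        ≤ ((∑ l, β l ^ 2) / m) * (((A * S)ᵀ * (A * S))⁻¹ k k) := by
  have hA : Injective A.mulVec := by
    refine mulVec_injective_of_forall_row_eq_single A fun l => ?_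
    obtain ⟨i, hi⟩ := Finset.card_pos.mp (by rw [hcard]; omega : 0 < (I l).card)
    obtain ⟨s, hs, hrow⟩ := hpure l i hi
    refine ⟨i, s, ?_, funext fun a => by rw [hrow, Pi.single_apply]⟩
    rcases hs with rfl | rfl <;> simp
  have hΘ : Injective (A * S).mulVec := by
    rw [show (A * S).mulVec = A.mulVec ∘ S.mulVec from funext fun v => (mulVec_mulVec v A S).symm]
    exact hA.comp (mulVec_injective_iff_isUnit.mpr hS.isUnit)
  have hgram : ((A * S)ᵀ * (A * S)).PosDef := by
    simpa only [conjTranspose_eq_transpose_of_trivial] using PosDef.conjTranspose_mul_self _ hΘ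
  refine ⟨hgram.isUnit, fun β k => ?_⟩
  rw [inv_transpose_mul_self_apply_self, Finset.sum_div]
  exact Finset.sum_mul_sum_le_sum_mul_sum_of_pairwise_disjoint _ (fun l => by positivity) _
    (fun i => sq_nonneg _) I hdisj
end

section
/- Equivalence of the proposed estimator with least squares on the predicted factors (Section 5 of the paper). Let n, p, K ≥ 1, let X be an n×p real matrix, y ∈ ℝ^n, and Θ̂ ∈ ℝ^{p×K} such that Θ̂ᵀ Θ̂ and Θ̂ᵀ Xᵀ X Θ̂ are both invertible. Set Σ̂ = n^{-1} Xᵀ X and Ẑ = X Θ̂ (Θ̂ᵀ Σ̂ Θ̂)^{-1} Θ̂ᵀ Θ̂. Then Ẑᵀ Ẑ is invertible and (Ẑᵀ Ẑ)^{-1} Ẑᵀ y = (Θ̂ᵀ Θ̂)^{-1} Θ̂ᵀ ( n^{-1} Xᵀ y ). -/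
/-! With `W = X Θ̂` and `G = Wᵀ W`, the predicted factors are `Ẑ = W M` for the invertible
`M = (n⁻¹ G)⁻¹ Θ̂ᵀ Θ̂`. Least squares commutes with such a reparametrisation,
`(Ẑᵀ Ẑ)⁻¹ Ẑᵀ = M⁻¹ G⁻¹ Wᵀ`, and `M⁻¹ G⁻¹ = n⁻¹ (Θ̂ᵀ Θ̂)⁻¹`. -/

open Matrix

noncomputable section

/-- The predicted factors `Ẑ = X Θ̂ (Θ̂ᵀ Σ̂ Θ̂)⁻¹ Θ̂ᵀ Θ̂` with `Σ̂ = n⁻¹ Xᵀ X`. -/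
def Zhat {n p K : ℕ} (X : Matrix (Fin n) (Fin p) ℝ) (Th : Matrix (Fin p) (Fin K) ℝ) :
    Matrix (Fin n) (Fin K) ℝ :=
  X * Th * (Thᵀ * ((n : ℝ)⁻¹ • (Xᵀ * X)) * Th)⁻¹ * (Thᵀ * Th)

namespace Matrix

variable {m k R : Type*} [Fintype m] [Fintype k] [DecidableEq k] [CommRing R]

def leastSquares (W : Matrix m k R) : Matrix k m R := (Wᵀ * W)⁻¹ * Wᵀ

theorem isUnit_transpose_mul_self_mul {W : Matrix m k R} {M : Matrix k k R}
    (hW : IsUnit (Wᵀ * W)) (hM : IsUnit M) : IsUnit ((W * M)ᵀ * (W * M)) := by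
  rw [transpose_mul, Matrix.mul_assoc, ← Matrix.mul_assoc Wᵀ]
  exact ((isUnit_transpose M).mpr hM).mul (hW.mul hM)

theorem leastSquares_mul {W : Matrix m k R} {M : Matrix k k R} (hM : IsUnit M) :
    leastSquares (W * M) = M⁻¹ * leastSquares W := by
  have hMt : IsUnit Mᵀ.det := (isUnit_iff_isUnit_det _).mp ((isUnit_transpose M).mpr hM)
  rw [leastSquares, leastSquares, transpose_mul, Matrix.mul_assoc, ← Matrix.mul_assoc Wᵀ,
    mul_inv_rev, mul_inv_rev, Matrix.mul_assoc, Matrix.mul_assoc,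
    nonsing_inv_mul_cancel_left _ _ hMt]

theorem isUnit_inv_smul_gram_mul {W : Matrix m k R} {A : Matrix k k R} {c : R}
    (hc : IsUnit c) (hW : IsUnit (Wᵀ * W)) (hA : IsUnit A) : IsUnit ((c • (Wᵀ * W))⁻¹ * A) :=
  (isUnit_nonsing_inv_iff.mpr (hW.smul hc.unit)).mul hA

theorem leastSquares_mul_inv_smul_gram_mul {W : Matrix m k R} {A : Matrix k k R} {c : R}
    (hc : IsUnit c) (hW : IsUnit (Wᵀ * W)) (hA : IsUnit A) :
    leastSquares (W * ((c • (Wᵀ * W))⁻¹ * A)) = c • (A⁻¹ * Wᵀ) := by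
  have hcWd : IsUnit (c • (Wᵀ * W)).det := (isUnit_iff_isUnit_det _).mp (hW.smul hc.unit)
  have hWd : IsUnit (Wᵀ * W).det := (isUnit_iff_isUnit_det _).mp hW
  rw [leastSquares_mul (isUnit_inv_smul_gram_mul hc hW hA), mul_inv_rev,
    nonsing_inv_nonsing_inv _ hcWd, leastSquares,
    Matrix.mul_assoc, Matrix.smul_mul, mul_nonsing_inv_cancel_left _ _ hWd, Matrix.mul_smul]

end Matrix

/-- Section 5: the proposed estimator coincides with the ordinary least squares
estimator obtained by regressing `y` on the predicted factors `Ẑ`: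
`(ẐᵀẐ)⁻¹ Ẑᵀ y = (Θ̂ᵀΘ̂)⁻¹ Θ̂ᵀ (n⁻¹ Xᵀ y)`. -/
theorem estimator_is_ols_on_predicted_factors {n p K : ℕ} (hn : 1 ≤ n)
    (X : Matrix (Fin n) (Fin p) ℝ) (y : Fin n → ℝ)
    (Th : Matrix (Fin p) (Fin K) ℝ)
    (h1 : IsUnit (Thᵀ * Th)) (h2 : IsUnit (Thᵀ * (Xᵀ * X) * Th)) :
    IsUnit ((Zhat X Th)ᵀ * Zhat X Th) ∧
    ((Zhat X Th)ᵀ * Zhat X Th)⁻¹.mulVec ((Zhat X Th)ᵀ.mulVec y)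
      = (Thᵀ * Th)⁻¹.mulVec (Thᵀ.mulVec ((n : ℝ)⁻¹ • Xᵀ.mulVec y)) := by
  have hc : IsUnit ((n : ℝ)⁻¹) := (inv_ne_zero (Nat.cast_ne_zero.mpr (by omega))).isUnit
  have hgram : (X * Th)ᵀ * (X * Th) = Thᵀ * (Xᵀ * X) * Th := by
    simp only [transpose_mul, Matrix.mul_assoc]
  have hZ : Zhat X Th = X * Th * (((n : ℝ)⁻¹ • ((X * Th)ᵀ * (X * Th)))⁻¹ * (Thᵀ * Th)) := by
    rw [hgram, Zhat, Matrix.mul_smul, Matrix.smul_mul, Matrix.mul_assoc (X * Th)]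
  rw [← hgram] at h2
  refine ⟨hZ ▸ isUnit_transpose_mul_self_mul h2 (isUnit_inv_smul_gram_mul hc h2 h1), ?_⟩
  rw [mulVec_mulVec, ← leastSquares, hZ, leastSquares_mul_inv_smul_gram_mul hc h2 h1,
    smul_mulVec, mulVec_smul, mulVec_smul, mulVec_mulVec, mulVec_mulVec, transpose_mul,
    Matrix.mul_assoc]
end
end

section
/- Deterministic ℓ1-bound for the quasi-pure-variable error matrix (core of Lemma B.6). Let K ≥ 1 and, for each a ∈ {1,…,K}, let Î_a ⊆ {1,…,p} be pairwise disjoint nonempty sets, each partitioned as Î_a = I_a ∪ L_a with I_a nonempty and I_a ∩ L_a = ∅. Let A, Â ∈ ℝ^{p×K} be such that for every a and every i ∈ Î_a the i-th row of Â equals e_a, and for every i ∈ I_a the i-th row of A equals e_a. Set Î = ∪_a Î_a, m̂_a = |Î_a|, ρ_a = |L_a| / m̂_a, and Δ = A_{Î·}ᵀ Â_{Î·} (Â_{Î·}ᵀ Â_{Î·})^{-1} − I_K (the inverse exists since Â_{Î·}ᵀ Â_{Î·} = diag(m̂_1,…,m̂_K)). Then for every v ∈ ℝ^K, ‖Δ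 v‖₁ ≤ M · Σ_{a=1}^K ρ_a |v_a| ≤ M · (Σ_{a=1}^K ρ_a²)^{1/2} ‖v‖₂, where M = max_{i ∈ ∪_a L_a} ‖A_{i·} − Â_{i·}‖₁ (with the convention that the maximum over the empty set is 0). -/
open Matrix Finset

noncomputable section

/-- Core of Lemma B.6: deterministic ℓ1-bound for the quasi-pure-variable error matrix
`Δ = A_{Î·}ᵀ Â_{Î·} (Â_{Î·}ᵀ Â_{Î·})⁻¹ − I_K`:  for every `v` and every `M` bounding
all ℓ1-distances `‖A_{i·} − Â_{i·}‖₁` over the quasi-pure rows `i ∈ ∪_a L_a`,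
`‖Δ v‖₁ ≤ M ∑_a ρ_a |v_a| ≤ M (∑_a ρ_a²)^{1/2} ‖v‖₂` where `ρ_a = |L_a| / |Î_a|`. -/
theorem quasi_pure_l1_bound {p K : ℕ}
    (Ihat Ipure L : Fin K → Finset (Fin p))
    (A Ah : Matrix (Fin p) (Fin K) ℝ)
    (hdisj : ∀ a b, a ≠ b → Disjoint (Ihat a) (Ihat b))
    (hne : ∀ a, (Ihat a).Nonempty)
    (hpart : ∀ a, Ihat a = Ipure a ∪ L a)
    (hIL : ∀ a, Disjoint (Ipure a) (L a))
    (hIne : ∀ a, (Ipure a).Nonempty)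
    (hAh : ∀ a, ∀ i ∈ Ihat a, ∀ b, Ah i b = if b = a then (1 : ℝ) else 0)
    (hA : ∀ a, ∀ i ∈ Ipure a, ∀ b, A i b = if b = a then (1 : ℝ) else 0)
    (M : ℝ) (hM : ∀ a, ∀ i ∈ L a, ∑ b, |A i b - Ah i b| ≤ M) :
    ∀ v : Fin K → ℝ,
      (∑ k, |(((rowsSub A (Finset.univ.biUnion Ihat))ᵀ *
          rowsSub Ah (Finset.univ.biUnion Ihat) *
          ((rowsSub Ah (Finset.univ.biUnion Ihat))ᵀ *
            rowsSub Ah (Finset.univ.biUnion Ihat))⁻¹ -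
          (1 : Matrix (Fin K) (Fin K) ℝ)).mulVec v) k|)
        ≤ M * ∑ a, (((L a).card : ℝ) / ((Ihat a).card : ℝ)) * |v a| ∧
      M * ∑ a, (((L a).card : ℝ) / ((Ihat a).card : ℝ)) * |v a|
        ≤ M * Real.sqrt (∑ a, (((L a).card : ℝ) / ((Ihat a).card : ℝ)) ^ 2) *
            Real.sqrt (∑ a, v a ^ 2) := by
  classical
  intro v
  set S := Finset.univ.biUnion Ihat with hS
  have hcard : ∀ a, (0 : ℝ) < ((Ihat a).card : ℝ) := fun a => by
    exact_mod_cast Finset.card_pos.2 (hne a)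
  -- sums over the subtype
  have hsumS : ∀ f : Fin p → ℝ, ∑ i : {x // x ∈ S}, f i = ∑ a, ∑ i ∈ Ihat a, f i := by
    intro f
    rw [Finset.sum_coe_sort S f]
    exact Finset.sum_biUnion (fun a _ b _ hab => hdisj a b hab)
  -- Gram matrix is diagonal
  have hGram : (rowsSub Ah S)ᵀ * rowsSub Ah S
      = Matrix.diagonal (fun a => ((Ihat a).card : ℝ)) := by
    ext a b
    rw [Matrix.mul_apply]
    simp only [rowsSub, Matrix.transpose_apply, Matrix.submatrix_apply, id]
    rw [hsumS (fun i => Ah i a * Ah i b)]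
    have inner : ∀ c, ∑ i ∈ Ihat c, Ah i a * Ah i b
        = ((Ihat c).card : ℝ) * ((if a = c then (1:ℝ) else 0) * (if b = c then (1:ℝ) else 0)) := by
      intro c
      rw [Finset.sum_congr rfl (fun i hi => by rw [hAh c i hi a, hAh c i hi b]),
        Finset.sum_const, nsmul_eq_mul]
    simp_rw [inner]
    by_cases h : a = b
    · subst h
      simp [Matrix.diagonal, mul_ite, ite_mul, Finset.sum_ite_eq]
    · simp [Matrix.diagonal, mul_ite, ite_mul, Finset.sum_ite_eq, h,
        Ne.symm h]
  have hinv : ((rowsSub Ah S)ᵀ * rowsSub Ah S)⁻¹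
      = Matrix.diagonal (fun a => (((Ihat a).card : ℝ))⁻¹) := by
    rw [hGram]
    refine Matrix.inv_eq_right_inv ?_
    rw [Matrix.diagonal_mul_diagonal]
    have h1 : (fun a => ((Ihat a).card : ℝ) * (((Ihat a).card : ℝ))⁻¹) = fun _ => (1:ℝ) :=
      funext fun a => mul_inv_cancel₀ (hcard a).ne'
    rw [h1, Matrix.diagonal_one]
  -- entries of Δ
  have hΔ : ∀ a b,
      ((rowsSub A S)ᵀ * rowsSub Ah S * ((rowsSub Ah S)ᵀ * rowsSub Ah S)⁻¹
        - (1 : Matrix (Fin K) (Fin K) ℝ)) a b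
      = (∑ i ∈ L b, (A i a - Ah i a)) / ((Ihat b).card : ℝ) := by
    intro a b
    rw [hinv, Matrix.sub_apply, Matrix.mul_diagonal, Matrix.one_apply]
    have hXY : ((rowsSub A S)ᵀ * rowsSub Ah S) a b = ∑ i ∈ Ihat b, A i a := by
      rw [Matrix.mul_apply]
      simp only [rowsSub, Matrix.transpose_apply, Matrix.submatrix_apply, id]
      rw [hsumS (fun i => A i a * Ah i b)]
      have inner : ∀ c, ∑ i ∈ Ihat c, A i a * Ah i b
          = if b = c then ∑ i ∈ Ihat c, A i a else 0 := by
        intro c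
        rw [Finset.sum_congr rfl (fun i hi => by rw [hAh c i hi b])]
        split <;> simp
      simp_rw [inner]
      simp
    rw [hXY]
    have hLsub : L b ⊆ Ihat b := by rw [hpart b]; exact Finset.subset_union_right
    have hsplit : ∑ i ∈ Ihat b, A i a
        = ((Ipure b).card : ℝ) * (if a = b then (1:ℝ) else 0) + ∑ i ∈ L b, A i a := by
      rw [hpart b, Finset.sum_union (hIL b)]
      congr 1
      rw [Finset.sum_congr rfl (fun i hi => hA b i hi a), Finset.sum_const, nsmul_eq_mul]
    have hsplit2 : ∑ i ∈ L b, (A i a - Ah i a)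
        = ∑ i ∈ L b, A i a - ((L b).card : ℝ) * (if a = b then (1:ℝ) else 0) := by
      rw [Finset.sum_sub_distrib]
      congr 1
      rw [Finset.sum_congr rfl (fun i hi => hAh b i (hLsub hi) a), Finset.sum_const,
        nsmul_eq_mul]
    have hcardsum : ((Ihat b).card : ℝ) = ((Ipure b).card : ℝ) + ((L b).card : ℝ) := by
      rw [hpart b, Finset.card_union_of_disjoint (hIL b)]
      push_cast; ring
    rw [hsplit, hsplit2]
    have hne' : ((Ihat b).card : ℝ) ≠ 0 := (hcard b).ne'
    field_simp
    rw [hcardsum]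
    split_ifs <;> ring
  -- abbreviation for Δ
  set Δ := (rowsSub A S)ᵀ * rowsSub Ah S * ((rowsSub Ah S)ᵀ * rowsSub Ah S)⁻¹
      - (1 : Matrix (Fin K) (Fin K) ℝ) with hΔdef
  -- column-sum bound
  have hcol : ∀ b, ∑ k, |Δ k b| ≤ (((L b).card : ℝ) / ((Ihat b).card : ℝ)) * M := by
    intro b
    have h1 : ∀ k, |Δ k b| = |∑ i ∈ L b, (A i k - Ah i k)| / ((Ihat b).card : ℝ) := by
      intro k
      rw [hΔ k b, abs_div, abs_of_pos (hcard b)]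
    simp_rw [h1]
    rw [← Finset.sum_div, div_mul_eq_mul_div]
    have h2 : ∑ k, |∑ i ∈ L b, (A i k - Ah i k)| ≤ ((L b).card : ℝ) * M := by
      calc ∑ k, |∑ i ∈ L b, (A i k - Ah i k)|
          ≤ ∑ k, ∑ i ∈ L b, |A i k - Ah i k| :=
            Finset.sum_le_sum fun k _ => Finset.abs_sum_le_sum_abs _ _
        _ = ∑ i ∈ L b, ∑ k, |A i k - Ah i k| := Finset.sum_comm
        _ ≤ ((L b).card : ℝ) * M := by
            have := Finset.sum_le_card_nsmul (L b) (fun i => ∑ k, |A i k - Ah i k|) M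
              (fun i hi => hM b i hi)
            rwa [nsmul_eq_mul] at this
    exact (div_le_div_iff_of_pos_right (hcard b)).mpr h2
  constructor
  · calc ∑ k, |Δ.mulVec v k|
        ≤ ∑ k, ∑ b, |Δ k b| * |v b| := by
          apply Finset.sum_le_sum
          intro k _
          rw [Matrix.mulVec, dotProduct]
          refine (Finset.abs_sum_le_sum_abs _ _).trans_eq ?_
          exact Finset.sum_congr rfl fun b _ => abs_mul _ _
      _ = ∑ b, (∑ k, |Δ k b|) * |v b| := by
          rw [Finset.sum_comm]
          exact Finset.sum_congr rfl fun b _ => (Finset.sum_mul _ _ _).symm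
      _ ≤ ∑ b, ((((L b).card : ℝ) / ((Ihat b).card : ℝ)) * M) * |v b| :=
          Finset.sum_le_sum fun b _ =>
            mul_le_mul_of_nonneg_right (hcol b) (abs_nonneg _)
      _ = M * ∑ a, (((L a).card : ℝ) / ((Ihat a).card : ℝ)) * |v a| := by
          rw [Finset.mul_sum]
          exact Finset.sum_congr rfl fun a _ => by ring
  · by_cases hM0 : 0 ≤ M
    · rw [mul_assoc]
      apply mul_le_mul_of_nonneg_left _ hM0
      have := Real.sum_mul_le_sqrt_mul_sqrt Finset.univ
        (fun a => (((L a).card : ℝ) / ((Ihat a).card : ℝ))) (fun a => |v a|)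
      simpa [sq_abs] using this
    · have hLe : ∀ a, L a = ∅ := by
        intro a
        by_contra h
        obtain ⟨i, hi⟩ := Finset.nonempty_iff_ne_empty.2 h
        have h1 := hM a i hi
        have h2 : (0:ℝ) ≤ ∑ b, |A i b - Ah i b| :=
          Finset.sum_nonneg fun b _ => abs_nonneg _
        linarith [not_le.mp hM0]
      simp [hLe]
end
end
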